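/- Assume A_q = exp(hH) and that Q − P + A_qᵀ P A_q is negative definite. Let x, r ∈ ℝ^n and let U* ∈ 𝒰^N be a minimizer of U ↦ J(x, r, U) over 𝒰^N, with first element u*_0. Set x⁺ = A_q x + h B_q u*_0 and r⁺ = exp(hH) r. Then V(x⁺, r⁺) ≤ V(x, r) − (x − r)ᵀ Q (x − r) − u*_0ᵀ R u*_0. In particular V is non-increasing along the closed loop. -/

import Mathlib

open Matrix Filter Topology

/-- Predicted states of the quantized system: `x₀ = x`, `x_{i+1} = A_q x_i + h B_q u_i`
(inputs beyond the horizon are taken to be `0`, but they are never used below). -/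
noncomputable def predState {n m N : ℕ} (Aq : Matrix (Fin n) (Fin n) ℝ)
    (Bq : Matrix (Fin n) (Fin m) ℝ) (h : ℝ) (x : Fin n → ℝ)
    (U : Fin N → Fin m → ℝ) : ℕ → (Fin n → ℝ)
  | 0 => x
  | i + 1 => Aq *ᵥ (predState Aq Bq h x U i) +
      h • (Bq *ᵥ (if hi : i < N then U ⟨i, hi⟩ else 0))

/-- Reference states: `r_i = (exp (h H))^i r`. -/
noncomputable def refState {n : ℕ} (H : Matrix (Fin n) (Fin n) ℝ) (h : ℝ)
    (r : Fin n → ℝ) (i : ℕ) : Fin n → ℝ :=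
  ((NormedSpace.exp (h • H)) ^ i) *ᵥ r

/-- The MPC cost
`J(x, r, U) = (x_N - r_N)ᵀ P (x_N - r_N) + Σ_{i<N} [(x_i - r_i)ᵀ Q (x_i - r_i) + u_iᵀ R u_i]`. -/
noncomputable def mpcCost {n m N : ℕ} (Aq : Matrix (Fin n) (Fin n) ℝ)
    (Bq : Matrix (Fin n) (Fin m) ℝ) (H : Matrix (Fin n) (Fin n) ℝ) (h : ℝ)
    (P Q : Matrix (Fin n) (Fin n) ℝ) (R : Matrix (Fin m) (Fin m) ℝ)
    (x r : Fin n → ℝ) (U : Fin N → Fin m → ℝ) : ℝ :=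
  (predState Aq Bq h x U N - refState H h r N) ⬝ᵥ
      (P *ᵥ (predState Aq Bq h x U N - refState H h r N)) +
    ∑ i : Fin N,
      ((predState Aq Bq h x U i - refState H h r i) ⬝ᵥ
          (Q *ᵥ (predState Aq Bq h x U i - refState H h r i)) +
        (U i) ⬝ᵥ (R *ᵥ (U i)))

/-- The quantized input set `𝒰^N` with `𝒰 = {-1,0,1}^m`. -/
def quantSet (m N : ℕ) : Set (Fin N → Fin m → ℝ) :=
  {U | ∀ i j, U i j = -1 ∨ U i j = 0 ∨ U i j = 1}

/-- The value function `V(x,r) = min_{U ∈ 𝒰^N} J(x,r,U)`. -/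
noncomputable def valueFn {n m N : ℕ} (Aq : Matrix (Fin n) (Fin n) ℝ)
    (Bq : Matrix (Fin n) (Fin m) ℝ) (H : Matrix (Fin n) (Fin n) ℝ) (h : ℝ)
    (P Q : Matrix (Fin n) (Fin n) ℝ) (R : Matrix (Fin m) (Fin m) ℝ)
    (x r : Fin n → ℝ) : ℝ :=
  sInf ((fun U => mpcCost Aq Bq H h P Q R x r U) '' quantSet m N)

/-- The shifted input sequence: drop `u₀` and append `0`. -/
def shiftSeq {m N : ℕ} (U : Fin N → Fin m → ℝ) : Fin N → Fin m → ℝ :=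
  fun i => if hi : (i : ℕ) + 1 < N then U ⟨(i : ℕ) + 1, hi⟩ else 0

/-!
Shift the optimal input sequence `U*` by one step and append the zero input: this sequence is
admissible at `(x⁺, r⁺)`, and since `A_q = exp (h H)` its predicted tracking errors are those of
`U*` moved one step ahead, plus the new terminal error `A_q e_N`. Its cost therefore telescopes to
`J(x, r, U*) - ℓ₀ + e_Nᵀ (Q - P + A_qᵀ P A_q) e_N`, where `ℓ₀` is the first stage cost, and the
last term is nonpositive.
-/

lemma quantSet_finite (m N : ℕ) : (quantSet m N).Finite := by
  refine (Set.Finite.pi fun _ : Fin N => Set.Finite.pi fun _ : Fin m =>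
    (Set.toFinite ({-1, 0, 1} : Set ℝ))).subset fun U hU i _ j _ => ?_
  simpa using hU i j

lemma shiftSeq_mem_quantSet {m N : ℕ} {U : Fin N → Fin m → ℝ} (hU : U ∈ quantSet m N) :
    shiftSeq U ∈ quantSet m N := by
  intro i j
  unfold shiftSeq
  split_ifs
  · exact hU _ j
  · exact Or.inr (Or.inl rfl)

section Cost

variable {n m N : ℕ} (Aq : Matrix (Fin n) (Fin n) ℝ) (Bq : Matrix (Fin n) (Fin m) ℝ)
  (H : Matrix (Fin n) (Fin n) ℝ) (h : ℝ) (P Q : Matrix (Fin n) (Fin n) ℝ)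
  (R : Matrix (Fin m) (Fin m) ℝ)

/-- The input `u_i`, extended by zero beyond the horizon as in `predState`. -/
def inputAt (U : Fin N → Fin m → ℝ) (i : ℕ) : Fin m → ℝ :=
  if hi : i < N then U ⟨i, hi⟩ else 0

lemma inputAt_shiftSeq (U : Fin N → Fin m → ℝ) (i : ℕ) :
    inputAt (shiftSeq U) i = inputAt U (i + 1) := by
  unfold inputAt shiftSeq
  by_cases hi : i + 1 < N
  · simp [hi, show i < N by omega]
  · by_cases hi' : i < N <;> simp [hi, hi']

lemma predState_succ (x : Fin n → ℝ) (U : Fin N → Fin m → ℝ) (i : ℕ) :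
    predState Aq Bq h x U (i + 1) =
      Aq *ᵥ predState Aq Bq h x U i + h • (Bq *ᵥ inputAt U i) := rfl

lemma predState_shiftSeq (hN : 0 < N) (x : Fin n → ℝ) (U : Fin N → Fin m → ℝ) (i : ℕ) :
    predState Aq Bq h (Aq *ᵥ x + h • (Bq *ᵥ U ⟨0, hN⟩)) (shiftSeq U) i =
      predState Aq Bq h x U (i + 1) := by
  induction i with
  | zero => simp [hN, predState]
  | succ i ih => rw [predState_succ, ih, inputAt_shiftSeq, ← predState_succ]

lemma refState_succ (r : Fin n → ℝ) (i : ℕ) :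
    refState H h r (i + 1) = NormedSpace.exp (h • H) *ᵥ refState H h r i := by
  rw [refState, refState, pow_succ', mulVec_mulVec]

lemma refState_mulVec_exp (r : Fin n → ℝ) (i : ℕ) :
    refState H h (NormedSpace.exp (h • H) *ᵥ r) i = refState H h r (i + 1) := by
  simp [refState, mulVec_mulVec, pow_succ]

noncomputable def stageCost (x r : Fin n → ℝ) (U : Fin N → Fin m → ℝ) (i : ℕ) : ℝ :=
  (predState Aq Bq h x U i - refState H h r i) ⬝ᵥ
      (Q *ᵥ (predState Aq Bq h x U i - refState H h r i)) +
    inputAt U i ⬝ᵥ (R *ᵥ inputAt U i)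

lemma mpcCost_eq_sum_range (x r : Fin n → ℝ) (U : Fin N → Fin m → ℝ) :
    mpcCost Aq Bq H h P Q R x r U =
      (predState Aq Bq h x U N - refState H h r N) ⬝ᵥ
          (P *ᵥ (predState Aq Bq h x U N - refState H h r N)) +
        ∑ i ∈ Finset.range N, stageCost Aq Bq H h Q R x r U i := by
  rw [mpcCost, ← Fin.sum_univ_eq_sum_range]
  simp [stageCost, inputAt]

lemma stageCost_shiftSeq (hN : 0 < N) (x r : Fin n → ℝ) (U : Fin N → Fin m → ℝ) (i : ℕ) :
    stageCost Aq Bq H h Q R (Aq *ᵥ x + h • (Bq *ᵥ U ⟨0, hN⟩))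
        (NormedSpace.exp (h • H) *ᵥ r) (shiftSeq U) i =
      stageCost Aq Bq H h Q R x r U (i + 1) := by
  rw [stageCost, predState_shiftSeq, refState_mulVec_exp, inputAt_shiftSeq, stageCost]

lemma dotProduct_mulVec_mulVec (A P : Matrix (Fin n) (Fin n) ℝ) (e : Fin n → ℝ) :
    (A *ᵥ e) ⬝ᵥ (P *ᵥ (A *ᵥ e)) = e ⬝ᵥ ((Aᵀ * P * A) *ᵥ e) := by
  rw [mulVec_mulVec, dotProduct_mulVec, dotProduct_mulVec, ← vecMul_transpose,
    vecMul_vecMul, mul_assoc]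

lemma mpcCost_shiftSeq (hN : 0 < N) (hA : Aq = NormedSpace.exp (h • H))
    (x r : Fin n → ℝ) (U : Fin N → Fin m → ℝ) :
    mpcCost Aq Bq H h P Q R (Aq *ᵥ x + h • (Bq *ᵥ U ⟨0, hN⟩))
        (NormedSpace.exp (h • H) *ᵥ r) (shiftSeq U) =
      mpcCost Aq Bq H h P Q R x r U - (x - r) ⬝ᵥ (Q *ᵥ (x - r)) -
        U ⟨0, hN⟩ ⬝ᵥ (R *ᵥ U ⟨0, hN⟩) +
        (predState Aq Bq h x U N - refState H h r N) ⬝ᵥ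
          ((Q - P + Aqᵀ * P * Aq) *ᵥ (predState Aq Bq h x U N - refState H h r N)) := by
  set e := predState Aq Bq h x U N - refState H h r N
  have terminal_error :
      predState Aq Bq h (Aq *ᵥ x + h • (Bq *ᵥ U ⟨0, hN⟩)) (shiftSeq U) N -
        refState H h (NormedSpace.exp (h • H) *ᵥ r) N = Aq *ᵥ e := by
    rw [predState_shiftSeq, refState_mulVec_exp, predState_succ, refState_succ, ← hA,
      mulVec_sub]
    simp [inputAt]
  have stage_zero : stageCost Aq Bq H h Q R x r U 0 =
      (x - r) ⬝ᵥ (Q *ᵥ (x - r)) + U ⟨0, hN⟩ ⬝ᵥ (R *ᵥ U ⟨0, hN⟩) := by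
    simp [stageCost, inputAt, hN, predState, refState]
  have stage_horizon : stageCost Aq Bq H h Q R x r U N = e ⬝ᵥ (Q *ᵥ e) := by
    simp [stageCost, inputAt, e]
  rw [mpcCost_eq_sum_range, mpcCost_eq_sum_range, terminal_error, dotProduct_mulVec_mulVec]
  simp only [stageCost_shiftSeq]
  have := Finset.sum_range_succ' (stageCost Aq Bq H h Q R x r U) N
  rw [Finset.sum_range_succ, stage_zero, stage_horizon] at this
  simp only [add_mulVec, sub_mulVec, dotProduct_add, dotProduct_sub]
  linarith

end Cost

lemma valueFn_le {n m N : ℕ} (Aq : Matrix (Fin n) (Fin n) ℝ) (Bq : Matrix (Fin n) (Fin m) ℝ)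
    (H : Matrix (Fin n) (Fin n) ℝ) (h : ℝ) (P Q : Matrix (Fin n) (Fin n) ℝ)
    (R : Matrix (Fin m) (Fin m) ℝ) (x r : Fin n → ℝ) {U : Fin N → Fin m → ℝ}
    (hU : U ∈ quantSet m N) :
    valueFn (N := N) Aq Bq H h P Q R x r ≤ mpcCost Aq Bq H h P Q R x r U :=
  csInf_le ((quantSet_finite m N).image _).bddBelow ⟨U, hU, rfl⟩

lemma valueFn_eq_of_isMinOn {n m N : ℕ} (Aq : Matrix (Fin n) (Fin n) ℝ)
    (Bq : Matrix (Fin n) (Fin m) ℝ) (H : Matrix (Fin n) (Fin n) ℝ) (h : ℝ)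
    (P Q : Matrix (Fin n) (Fin n) ℝ) (R : Matrix (Fin m) (Fin m) ℝ) (x r : Fin n → ℝ)
    {U : Fin N → Fin m → ℝ} (hU : U ∈ quantSet m N)
    (hmin : ∀ V ∈ quantSet m N,
      mpcCost Aq Bq H h P Q R x r U ≤ mpcCost Aq Bq H h P Q R x r V) :
    valueFn (N := N) Aq Bq H h P Q R x r = mpcCost Aq Bq H h P Q R x r U :=
  (valueFn_le Aq Bq H h P Q R x r hU).antisymm <|
    le_csInf ⟨_, U, hU, rfl⟩ (by rintro _ ⟨V, hV, rfl⟩; exact hmin V hV)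

theorem stmt3_general {n m N : ℕ} (hN : 0 < N) (h : ℝ)
    (Aq H : Matrix (Fin n) (Fin n) ℝ) (Bq : Matrix (Fin n) (Fin m) ℝ)
    (P Q : Matrix (Fin n) (Fin n) ℝ) (R : Matrix (Fin m) (Fin m) ℝ)
    (hA : Aq = NormedSpace.exp (h • H))
    (hneg : (-(Q - P + Aqᵀ * P * Aq)).PosDef)
    (x r : Fin n → ℝ) (Ustar : Fin N → Fin m → ℝ)
    (hmem : Ustar ∈ quantSet m N)
    (hmin : ∀ U ∈ quantSet m N,
      mpcCost Aq Bq H h P Q R x r Ustar ≤ mpcCost Aq Bq H h P Q R x r U) :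
    valueFn (N := N) Aq Bq H h P Q R
        (Aq *ᵥ x + h • (Bq *ᵥ Ustar ⟨0, hN⟩))
        (NormedSpace.exp (h • H) *ᵥ r) ≤
      valueFn (N := N) Aq Bq H h P Q R x r -
        (x - r) ⬝ᵥ (Q *ᵥ (x - r)) -
        (Ustar ⟨0, hN⟩) ⬝ᵥ (R *ᵥ (Ustar ⟨0, hN⟩)) := by
  set e := predState Aq Bq h x Ustar N - refState H h r N
  have terminal_nonpos : e ⬝ᵥ ((Q - P + Aqᵀ * P * Aq) *ᵥ e) ≤ 0 := by
    have := hneg.posSemidef.dotProduct_mulVec_nonneg e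
    rw [star_trivial, neg_mulVec, dotProduct_neg] at this
    linarith
  calc _ ≤ mpcCost Aq Bq H h P Q R (Aq *ᵥ x + h • (Bq *ᵥ Ustar ⟨0, hN⟩))
          (NormedSpace.exp (h • H) *ᵥ r) (shiftSeq Ustar) :=
        valueFn_le _ _ _ _ _ _ _ _ _ (shiftSeq_mem_quantSet hmem)
    _ ≤ _ := by
      rw [mpcCost_shiftSeq Aq Bq H h P Q R hN hA, valueFn_eq_of_isMinOn _ _ _ _ _ _ _ _ _ hmem hmin]
      linarith

/-- value-function descent inequality along the closed loop. -/
theorem stmt3 {n m N : ℕ} (hN : 0 < N) (h : ℝ) (hh : 0 < h)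
    (Aq H : Matrix (Fin n) (Fin n) ℝ) (Bq : Matrix (Fin n) (Fin m) ℝ)
    (P Q : Matrix (Fin n) (Fin n) ℝ) (R : Matrix (Fin m) (Fin m) ℝ)
    (hP : P.PosDef) (hQ : Q.PosDef) (hR : R.PosDef)
    (hA : Aq = NormedSpace.exp (h • H))
    (hneg : (-(Q - P + Aqᵀ * P * Aq)).PosDef)
    (x r : Fin n → ℝ) (Ustar : Fin N → Fin m → ℝ)
    (hmem : Ustar ∈ quantSet m N)
    (hmin : ∀ U ∈ quantSet m N,
      mpcCost Aq Bq H h P Q R x r Ustar ≤ mpcCost Aq Bq H h P Q R x r U) :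
    valueFn (N := N) Aq Bq H h P Q R
        (Aq *ᵥ x + h • (Bq *ᵥ Ustar ⟨0, hN⟩))
        (NormedSpace.exp (h • H) *ᵥ r) ≤
      valueFn (N := N) Aq Bq H h P Q R x r -
        (x - r) ⬝ᵥ (Q *ᵥ (x - r)) -
        (Ustar ⟨0, hN⟩) ⬝ᵥ (R *ᵥ (Ustar ⟨0, hN⟩)) :=
  stmt3_general hN h Aq H Bq P Q R hA hneg x r Ustar hmem hmin
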